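/- Let $r \geq 1$ be an integer, $\omega_2$ a nonzero complex number, and $z \in [0,1)$. Define $\mathfrak{F}(\xi; z) = (2\pi i/\omega_2)\, e^{2\pi i \xi z/\omega_2}/(e^{2\pi i \xi/\omega_2} - 1)$. Then for any $\xi \notin \omega_2\mathbb{Z}$, the residue at $\eta = 0$ of $\eta \mapsto \mathfrak{F}(\xi; z)^r \eta^{-1} - \mathfrak{F}(\eta; z)^r \, \mathfrak{F}(\xi - \eta; \{rz\})$ is zero; equivalently, $\mathrm{Res}_{\eta=0}\, \mathfrak{F}(\eta; z)^r \, \mathfrak{F}(\xi - \eta; \{rz\}) = \mathfrak{F}(\xi; z)^r$. -/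

import Mathlib

/-!
Put `a = 2πi/ω₂`, `u = e^{aη}`, `q = e^{aξ}` and `rz = m + {rz}` with `0 ≤ m < r`. Then
`𝔉(η; z)^r 𝔉(ξ - η; {rz}) = a^{r+1} e^{aξ{rz}} · u · u^m / ((u - 1)^r (q - u))`.
Partial fractions in `t = u - 1`, `s = q - 1` write `(1 + t)^m / (t^r (s - t))` as
`(1 + s)^m / (s^r (s - t))` plus a principal part `∑_{j < r} c_j t^{-(j+1)}`, and since `m < r`
(no residue at infinity) the coefficient of `1/t` is `c_0 = (1 + s)^m / s^r`.
Because `a u = dt/dη`, the term `u t^{-(j+1)}` has residue `1/a` for `j = 0` and is an exact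
derivative for `j ≥ 1`, while the first term is holomorphic at `η = 0`. So the residue is
`a^r e^{aξ{rz}} q^m / (q - 1)^r = 𝔉(ξ; z)^r`.
-/

open Complex Filter

/-- The generating function `𝔉(ξ; z; ω₂)` of Lerch zeta-functions. -/
noncomputable def lerchF (ω₂ z ξ : ℂ) : ℂ :=
  (2 * Real.pi * Complex.I / ω₂) * Complex.exp (2 * Real.pi * Complex.I * ξ * z / ω₂) /
    (Complex.exp (2 * Real.pi * Complex.I * ξ / ω₂) - 1)

open Topology
open scoped Nat

section Residue

variable {𝕜 : Type*} [NontriviallyNormedField 𝕜]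

theorem iteratedDeriv_pow_mul_zero {f : 𝕜 → 𝕜} {n : ℕ} (hf : ContDiffAt 𝕜 n f 0) (k : ℕ) :
    iteratedDeriv n (fun x => x ^ k * f x) 0 =
      if k ≤ n then (n.descFactorial k : 𝕜) * iteratedDeriv (n - k) f 0 else 0 := by
  rw [iteratedDeriv_fun_mul (contDiffAt_fun_id.pow k) hf]
  simp only [iteratedDeriv_fun_pow_zero]
  split_ifs with hk
  · rw [Finset.sum_eq_single k (fun i _ hi => by simp [hi]) (fun h => by simp at h; omega),
      if_pos rfl, Nat.descFactorial_eq_factorial_mul_choose]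
    push_cast
    ring
  · exact Finset.sum_eq_zero fun i hi => by simp at hi; simp [show i ≠ k by omega]

/-- `f` has a pole of order at most `n + 1` at `0`, with residue `c`. -/
def HasResidueAtZero (f : 𝕜 → 𝕜) (n : ℕ) (c : 𝕜) : Prop :=
  ∃ g : 𝕜 → 𝕜, AnalyticAt 𝕜 g 0 ∧ (∀ᶠ x in 𝓝[≠] 0, f x = g x / x ^ (n + 1)) ∧
    iteratedDeriv n g 0 / n ! = c

namespace HasResidueAtZero

variable {f f₁ f₂ : 𝕜 → 𝕜} {n : ℕ} {c c₁ c₂ : 𝕜}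

theorem congr (h : HasResidueAtZero f n c) (hf : f =ᶠ[𝓝[≠] 0] f₁) :
    HasResidueAtZero f₁ n c := by
  obtain ⟨g, hg, hfg, rfl⟩ := h
  exact ⟨g, hg, hf.symm.trans hfg, rfl⟩

theorem zero (n : ℕ) : HasResidueAtZero (fun _ => (0 : 𝕜)) n 0 :=
  ⟨0, analyticAt_const, by simp, by simp⟩

theorem const_mul (h : HasResidueAtZero f n c) (a : 𝕜) :
    HasResidueAtZero (fun x => a * f x) n (a * c) := by
  obtain ⟨g, hg, hfg, rfl⟩ := h
  refine ⟨fun x => a * g x, analyticAt_const.mul hg, ?_, ?_⟩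
  · filter_upwards [hfg] with x h
    rw [h, mul_div_assoc]
  · rw [iteratedDeriv_const_mul_field, mul_div_assoc]

variable [CompleteSpace 𝕜]

theorem add (h₁ : HasResidueAtZero f₁ n c₁) (h₂ : HasResidueAtZero f₂ n c₂) :
    HasResidueAtZero (fun x => f₁ x + f₂ x) n (c₁ + c₂) := by
  obtain ⟨g₁, hg₁, hfg₁, rfl⟩ := h₁
  obtain ⟨g₂, hg₂, hfg₂, rfl⟩ := h₂
  refine ⟨fun x => g₁ x + g₂ x, hg₁.add hg₂, ?_, ?_⟩
  · filter_upwards [hfg₁, hfg₂] with x h₁ h₂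
    rw [h₁, h₂, add_div]
  · rw [iteratedDeriv_fun_add hg₁.contDiffAt hg₂.contDiffAt, add_div]

theorem sum {ι : Type*} (s : Finset ι) {f : ι → 𝕜 → 𝕜} {c : ι → 𝕜}
    (h : ∀ i ∈ s, HasResidueAtZero (f i) n (c i)) :
    HasResidueAtZero (fun x => ∑ i ∈ s, f i x) n (∑ i ∈ s, c i) := by
  classical
  induction s using Finset.induction_on with
  | empty => simpa using zero n
  | insert i s hi ih =>
    simp only [Finset.sum_insert hi]
    exact (h i (s.mem_insert_self i)).add (ih fun j hj => h j (Finset.mem_insert_of_mem hj))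

theorem mono [CharZero 𝕜] (h : HasResidueAtZero f n c) {N : ℕ} (hN : n ≤ N) :
    HasResidueAtZero f N c := by
  obtain ⟨g, hg, hfg, rfl⟩ := h
  refine ⟨fun x => x ^ (N - n) * g x, (analyticAt_id.pow _).mul hg, ?_, ?_⟩
  · filter_upwards [hfg, self_mem_nhdsWithin] with x h (hx : x ≠ 0)
    rw [h, ← mul_div_mul_left _ _ (pow_ne_zero (N - n) hx), ← pow_add]
    congr 2
    omega
  · rw [iteratedDeriv_pow_mul_zero hg.contDiffAt, if_pos (Nat.sub_le N n), Nat.sub_sub_self hN,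
      ← Nat.factorial_mul_descFactorial (Nat.sub_le N n), Nat.sub_sub_self hN]
    have : (N.descFactorial (N - n) : 𝕜) ≠ 0 := by
      simp [Nat.descFactorial_eq_zero_iff_lt]
    push_cast
    rw [mul_comm (n ! : 𝕜), mul_div_mul_left _ _ this]

end HasResidueAtZero

variable {f : 𝕜 → 𝕜}

theorem hasResidueAtZero_div_id (hf : AnalyticAt 𝕜 f 0) :
    HasResidueAtZero (fun x => f x / x) 0 (f 0) :=
  ⟨f, hf, by simp, by simp⟩

variable [CompleteSpace 𝕜]

theorem hasResidueAtZero_of_analyticAt (hf : AnalyticAt 𝕜 f 0) (n : ℕ) :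
    HasResidueAtZero f n 0 := by
  refine ⟨fun x => x ^ (n + 1) * f x, (analyticAt_id.pow _).mul hf, ?_, ?_⟩
  · filter_upwards [self_mem_nhdsWithin] with x (hx : x ≠ 0)
    rw [mul_div_cancel_left₀ _ (pow_ne_zero _ hx)]
  · rw [iteratedDeriv_pow_mul_zero hf.contDiffAt, if_neg (by omega), zero_div]

theorem hasResidueAtZero_deriv {G W : 𝕜 → 𝕜} {n : ℕ} (hW : AnalyticAt 𝕜 W 0)
    (hG : G =ᶠ[𝓝[≠] 0] fun x => W x / x ^ n) : HasResidueAtZero (deriv G) n 0 := by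
  refine ⟨fun x => x ^ 1 * deriv W x - n * W x, ((analyticAt_id.pow 1).mul hW.deriv).sub
    (analyticAt_const.mul hW), ?_, ?_⟩
  · have hG' := eventually_eventually_nhdsWithin.2 hG
    filter_upwards [hG', self_mem_nhdsWithin, nhdsWithin_le_nhds hW.eventually_analyticAt]
      with x hGx (hx : x ≠ 0) hWx
    rw [isOpen_compl_singleton.nhdsWithin_eq hx] at hGx
    rw [(show G =ᶠ[𝓝 x] _ from hGx).deriv_eq,
      (hWx.differentiableAt.hasDerivAt.fun_div (hasDerivAt_pow n x) (pow_ne_zero n hx)).deriv]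
    have : (n : 𝕜) * x ^ (n - 1) * x = n * x ^ n := by
      cases n <;> simp [pow_succ, mul_assoc]
    rw [div_eq_div_iff (pow_ne_zero _ (pow_ne_zero _ hx)) (pow_ne_zero _ hx)]
    linear_combination (-(W x) * x ^ n) * this
  · rw [iteratedDeriv_fun_sub ((contDiffAt_fun_id.pow 1).mul hW.deriv.contDiffAt)
      (contDiffAt_const.mul hW.contDiffAt), iteratedDeriv_pow_mul_zero hW.deriv.contDiffAt,
      iteratedDeriv_const_mul_field]
    cases n with
    | zero => simp
    | succ n => simp [← iteratedDeriv_succ']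

theorem hasResidueAtZero_deriv_div_pow [CharZero 𝕜] {E : 𝕜 → 𝕜} (hE : AnalyticAt 𝕜 E 0)
    (hE0 : E 0 = 0) (hE' : deriv E 0 ≠ 0) (j : ℕ) :
    HasResidueAtZero (fun x => deriv E x / E x ^ (j + 1)) j (if j = 0 then 1 else 0) := by
  set F := dslope E 0
  have hF : AnalyticAt 𝕜 F 0 := by
    obtain ⟨p, hp⟩ := hE
    exact ⟨p.fslope, hp.has_fpower_series_dslope_fslope⟩
  have hF0 : F 0 = deriv E 0 := dslope_same E 0
  have hEF (x : 𝕜) : E x = x * F x := by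
    simpa [hE0] using (sub_smul_dslope E 0 x).symm
  cases j with
  | zero =>
    have h := hasResidueAtZero_div_id (hE.deriv.fun_div hF (hF0 ▸ hE'))
    rw [hF0, div_self hE'] at h
    refine h.congr (Eventually.of_forall fun x => ?_)
    simp [hEF x, div_div, mul_comm]
  | succ i =>
    have hG :
        HasResidueAtZero (deriv fun x => -((i : 𝕜) + 1)⁻¹ * (E x ^ (i + 1))⁻¹) (i + 1) 0 :=
      hasResidueAtZero_deriv (W := fun x => -((i : 𝕜) + 1)⁻¹ * (F x ^ (i + 1))⁻¹)
        (analyticAt_const.mul ((hF.pow _).inv (pow_ne_zero _ (hF0 ▸ hE'))))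
        (Eventually.of_forall fun x => by simp only [hEF x, mul_pow, mul_inv]; ring)
    refine hG.congr ?_
    filter_upwards [hE.differentiableAt.hasDerivAt.eventually_ne (c := 0) hE',
      nhdsWithin_le_nhds hE.eventually_analyticAt] with x hx hEx
    have hi : (i : 𝕜) + 1 ≠ 0 := by exact_mod_cast i.succ_ne_zero
    rw [(((hEx.differentiableAt.hasDerivAt.fun_pow (i + 1)).fun_inv (pow_ne_zero _ hx)).const_mul
      _).deriv, Nat.add_sub_cancel]
    push_cast
    field_simp
    ring

end Residue

section PartialFractions

open Polynomial

theorem exists_one_add_pow_mul_pow_sub_eq {R : Type*} [CommRing R] (s : R) {m n : ℕ}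
    (hm : m ≤ n) :
    ∃ Q : R[X], Q.natDegree ≤ n ∧ Q.coeff n = -(1 + s) ^ m ∧
      ∀ t, (1 + t) ^ m * s ^ (n + 1) - (1 + s) ^ m * t ^ (n + 1) = (t - s) * Q.eval t := by
  nontriviality R
  set P : R[X] := (1 + X) ^ m * C (s ^ (n + 1)) - C ((1 + s) ^ m) * X ^ (n + 1)
  have hPn : P.coeff (n + 1) = -(1 + s) ^ m := by
    rw [coeff_sub, coeff_mul_C, coeff_one_add_X_pow, Nat.choose_eq_zero_of_lt (by omega),
      coeff_C_mul_X_pow, if_pos rfl, Nat.cast_zero, zero_mul, zero_sub]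
  have hPdeg : P.natDegree ≤ n + 1 := by
    simp only [P]
    compute_degree
    omega
  have hP : (X - C s) * (P /ₘ (X - C s)) = P := mul_divByMonic_eq_iff_isRoot.2 (by simp [P])
  have hQdeg : (P /ₘ (X - C s)).natDegree ≤ n := by
    rw [natDegree_divByMonic _ (monic_X_sub_C s), natDegree_X_sub_C]
    omega
  refine ⟨P /ₘ (X - C s), hQdeg, ?_, fun t => by simpa [P] using congr_arg (eval t) hP.symm⟩
  rw [← hP, sub_mul, coeff_sub, coeff_X_mul, coeff_C_mul,
    coeff_eq_zero_of_natDegree_lt (by omega : _ < n + 1)] at hPn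
  simpa using hPn

theorem exists_one_add_pow_div_eq_add_sum {K : Type*} [Field K] {s : K} (hs : s ≠ 0) {m n : ℕ}
    (hm : m ≤ n) :
    ∃ c : ℕ → K, c 0 = (1 + s) ^ m / s ^ (n + 1) ∧ ∀ t, t ≠ 0 → t ≠ s →
      (1 + t) ^ m / (t ^ (n + 1) * (s - t)) = (1 + s) ^ m / s ^ (n + 1) / (s - t) +
        ∑ j ∈ Finset.range (n + 1), c j / t ^ (j + 1) := by
  obtain ⟨Q, hQdeg, hQn, hQ⟩ := exists_one_add_pow_mul_pow_sub_eq s hm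
  refine ⟨fun j => -Q.coeff (n - j) / s ^ (n + 1), by simp [hQn], fun t ht hts => ?_⟩
  have hsum : ∑ j ∈ Finset.range (n + 1), -Q.coeff (n - j) / s ^ (n + 1) / t ^ (j + 1) =
      -Q.eval t / (s ^ (n + 1) * t ^ (n + 1)) := by
    rw [eval_eq_sum_range' (Nat.lt_succ_of_le hQdeg),
      ← Finset.sum_range_reflect (fun k => Q.coeff k * t ^ k),
      ← Finset.sum_neg_distrib, Finset.sum_div]
    refine Finset.sum_congr rfl fun j hj => ?_
    have ht : t ^ (n + 1) = t ^ (j + 1) * t ^ (n - j) := by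
      rw [← pow_add]
      congr 1
      simp at hj
      omega
    rw [Nat.succ_sub_one, ht]
    field_simp
  rw [hsum]
  have : s - t ≠ 0 := sub_ne_zero.2 hts.symm
  field_simp
  linear_combination hQ t

end PartialFractions

noncomputable def lerchKernel (a x y : ℂ) : ℂ := a * exp (a * y * x) / (exp (a * y) - 1)

theorem lerchF_eq_lerchKernel (ω₂ x y : ℂ) :
    lerchF ω₂ x y = lerchKernel (2 * Real.pi * I / ω₂) x y := by
  simp only [lerchF, lerchKernel]
  ring_nf

theorem exp_mul_pow_of_natCast_add_eq {m n : ℕ} {w z : ℂ} (hmw : (m : ℂ) + w = (n + 1) * z)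
    (b : ℂ) : exp (b * z) ^ (n + 1) = exp b ^ m * exp (b * w) := by
  rw [← exp_nat_mul, ← exp_nat_mul, ← exp_add]
  congr 1
  push_cast
  linear_combination -b * hmw

theorem lerchKernel_pow_mul_lerchKernel_sub {a z w : ℂ} {m n : ℕ}
    (hmw : (m : ℂ) + w = (n + 1) * z) {ξ η : ℂ} (hη : exp (a * η) ≠ 1)
    (hηξ : exp (a * η) ≠ exp (a * ξ)) :
    lerchKernel a z η ^ (n + 1) * lerchKernel a w (ξ - η) =
      a ^ (n + 2) * exp (a * ξ * w) * exp (a * η) *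
        (exp (a * η) ^ m / ((exp (a * η) - 1) ^ (n + 1) * (exp (a * ξ) - exp (a * η)))) := by
  have h₁ : exp (a * (ξ - η) * w) = exp (a * ξ * w) / exp (a * η * w) := by
    rw [← exp_sub]; ring_nf
  have h₂ : exp (a * (ξ - η)) = exp (a * ξ) / exp (a * η) := by
    rw [← exp_sub]; ring_nf
  have h₃ : exp (a * η * z) ^ (n + 1) = exp (a * η) ^ m * exp (a * η * w) :=
    exp_mul_pow_of_natCast_add_eq hmw (a * η)
  have : exp (a * η) - 1 ≠ 0 := sub_ne_zero.2 hη
  have : exp (a * ξ) - exp (a * η) ≠ 0 := sub_ne_zero.2 hηξ.symm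
  simp only [lerchKernel, div_pow, mul_pow, h₁, h₂, h₃]
  field_simp
  ring

theorem hasResidueAtZero_lerchKernel_pow_mul {a z w ξ : ℂ} {m n : ℕ} (ha : a ≠ 0)
    (hξ : exp (a * ξ) ≠ 1) (hm : m ≤ n) (hmw : (m : ℂ) + w = (n + 1) * z) :
    HasResidueAtZero (fun η => lerchKernel a z η ^ (n + 1) * lerchKernel a w (ξ - η)) n
      (lerchKernel a z ξ ^ (n + 1)) := by
  set q := exp (a * ξ) with hq
  have hq1 : q - 1 ≠ 0 := sub_ne_zero.2 hξ
  set E : ℂ → ℂ := fun x => exp (a * x) - 1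
  have hE : AnalyticAt ℂ E 0 := by fun_prop
  have hE' (x : ℂ) : HasDerivAt E (a * exp (a * x)) x :=
    ((((hasDerivAt_id x).const_mul a).cexp).sub_const 1).congr_deriv (by simp [mul_comm])
  obtain ⟨c, hc0, hc⟩ := exists_one_add_pow_div_eq_add_sum hq1 hm
  have hhol : HasResidueAtZero (fun η => exp (a * η) / (q - exp (a * η))) n 0 :=
    hasResidueAtZero_of_analyticAt (by fun_prop (disch := simpa [sub_eq_zero] using hξ)) n
  have hprin (j : ℕ) (hj : j ∈ Finset.range (n + 1)) :
      HasResidueAtZero (fun η => deriv E η / E η ^ (j + 1)) n (if j = 0 then 1 else 0) :=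
    (hasResidueAtZero_deriv_div_pow hE (by simp [E]) (by simp [(hE' 0).deriv, ha]) j).mono
      (by simp at hj; omega)
  have hres := ((hhol.const_mul (q ^ m / (q - 1) ^ (n + 1))).add
    (HasResidueAtZero.sum _ fun j hj => (hprin j hj).const_mul (c j * a⁻¹))).const_mul
    (a ^ (n + 2) * exp (a * ξ * w))
  convert hres.congr ?_ using 1
  · simp only [mul_zero, zero_add, mul_ite, mul_one, Finset.sum_ite_eq', Finset.mem_range,
      Nat.zero_lt_succ, if_true, hc0, lerchKernel, div_pow, mul_pow,
      exp_mul_pow_of_natCast_add_eq hmw, add_sub_cancel]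
    rw [← hq]
    field_simp
    ring
  · filter_upwards [(hE' 0).eventually_ne (c := 0) (by simpa using ha),
      nhdsWithin_le_nhds ((by fun_prop : Continuous fun η => exp (a * η)).continuousAt.eventually_ne
        (by simpa using hξ.symm))] with η hη hηq
    have ht : exp (a * η) ≠ 1 := sub_ne_zero.1 hη
    have hpf := hc (exp (a * η) - 1) hη (by simpa [sub_eq_zero] using hηq)
    simp only [add_sub_cancel, sub_sub_sub_cancel_right] at hpf
    rw [lerchKernel_pow_mul_lerchKernel_sub hmw ht hηq, hpf, (hE' η).deriv, mul_add, mul_add,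
      Finset.mul_sum, Finset.mul_sum]
    congr 1
    · ring
    · refine Finset.sum_congr rfl fun j _ => ?_
      field_simp
      rfl

theorem exp_two_pi_I_div_mul_ne_one {ω₂ ξ : ℂ} (hω : ω₂ ≠ 0) (hξ : ∀ n : ℤ, ξ ≠ n * ω₂) :
    exp (2 * Real.pi * I / ω₂ * ξ) ≠ 1 := by
  rw [Ne, exp_eq_one_iff]
  rintro ⟨n, hn⟩
  refine hξ n ?_
  field_simp at hn
  rw [hn, mul_comm]

theorem natCast_floor_add_fract {x : ℝ} (hx : 0 ≤ x) : (⌊x⌋₊ : ℝ) + Int.fract x = x := by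
  rw [natCast_floor_eq_intCast_floor hx, Int.floor_add_fract]

theorem residue_lerchF_power (r : ℕ) (hr : 1 ≤ r) (ω₂ : ℂ) (hω : ω₂ ≠ 0)
    (z : ℝ) (hz0 : 0 ≤ z) (hz1 : z < 1) (ξ : ℂ) (hξ : ∀ n : ℤ, ξ ≠ n * ω₂) :
    ∃ g : ℂ → ℂ, AnalyticAt ℂ g 0 ∧
      (∀ᶠ η in nhdsWithin (0 : ℂ) {0}ᶜ,
        (lerchF ω₂ (z : ℂ) η) ^ r * lerchF ω₂ ((Int.fract (r * z) : ℝ) : ℂ) (ξ - η)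
          = g η / η ^ r) ∧
      iteratedDeriv (r - 1) g 0 / (Nat.factorial (r - 1) : ℂ) = (lerchF ω₂ (z : ℂ) ξ) ^ r := by
  obtain ⟨n, rfl⟩ := Nat.exists_eq_add_of_le' hr
  have hrz : 0 ≤ ((n + 1 : ℕ) : ℝ) * z := by positivity
  have hm : ⌊((n + 1 : ℕ) : ℝ) * z⌋₊ ≤ n := Nat.lt_succ_iff.1 <| (Nat.floor_lt hrz).2 <| by
    push_cast; nlinarith
  have hmw : (⌊((n + 1 : ℕ) : ℝ) * z⌋₊ : ℂ) + (Int.fract (((n + 1 : ℕ) : ℝ) * z) : ℝ) =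
      (n + 1) * z := by
    exact_mod_cast natCast_floor_add_fract hrz
  have h2πI : 2 * (Real.pi : ℂ) * I ≠ 0 := by simp [Real.pi_ne_zero, I_ne_zero]
  simp only [lerchF_eq_lerchKernel]
  simpa [HasResidueAtZero] using hasResidueAtZero_lerchKernel_pow_mul (div_ne_zero h2πI hω)
    (exp_two_pi_I_div_mul_ne_one hω hξ) hm hmw
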